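/- arXiv:1304.7160 — 3 statements merged into one kernel-verified Lean document; each statement's English description precedes it below -/
import Mathlib

section
/- For any nonempty ordered graph (H,π), any r ≥ 2, the function θ ↦ λ_{r,θ}(H,π) on [0,2] is continuous and piecewise linear with integer coefficients; in particular there exist finitely many linear functions with integer coefficients whose pointwise minimum structure gives λ_{r,θ}(H,π). -/
open scoped Classical

/-- A finite (vertex-)ordered graph: the vertices are natural numbers, ordered by the usual
order on `ℕ` with the *smallest* vertex being the youngest (the last one presented). -/
structure FinGraph where
  verts : Finset ℕ
  edges : Finset (Sym2 ℕ)
  edge_sub : ∀ e ∈ edges, ∀ x ∈ e, x ∈ verts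
  loopless : ∀ e ∈ edges, ¬ e.IsDiag

/-- The degree of a vertex `u` in `G`. -/
noncomputable def FinGraph.deg (G : FinGraph) (u : ℕ) : ℕ :=
  (G.edges.filter (fun e => u ∈ e)).card

/-- Delete the vertex `u` together with all incident edges. -/
noncomputable def FinGraph.del (G : FinGraph) (u : ℕ) : FinGraph where
  verts := G.verts.erase u
  edges := G.edges.filter (fun e => u ∉ e)
  edge_sub := by
    intro e he x hx
    rw [Finset.mem_filter] at he
    exact Finset.mem_erase.mpr ⟨fun hxu => he.2 (hxu ▸ hx), G.edge_sub e he.1 x hx⟩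
  loopless := by
    intro e he
    rw [Finset.mem_filter] at he
    exact G.loopless e he.1

/-- The youngest vertex of `G` (the minimum of its vertex set). -/
noncomputable def FinGraph.young (G : FinGraph) : ℕ := sInf (G.verts : Set ℕ)

/-- Fueled version of the recursive quantity `λ_{r,θ}` of Gugelmann–Spöhel:
`λ_{r,θ}(H) = 0` if `H` has no vertices, and otherwise, with `u₁` the youngest vertex,
`λ_{r,θ}(H) = 1 + (λ_{r,θ}(H∖u₁) - θ·deg_H(u₁))
            + (r-1)·min_{J ⊆ H, u₁ ∈ J} (λ_{r,θ}(J∖u₁) - θ·deg_J(u₁))`. -/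
noncomputable def lamAux (r : ℕ) (θ : ℝ) : ℕ → FinGraph → ℝ
  | 0, _ => 0
  | n + 1, G =>
    if G.verts.Nonempty then
      1 + (lamAux r θ n (G.del G.young) - θ * (G.deg G.young : ℝ))
        + ((r : ℝ) - 1) *
          sInf { x : ℝ | ∃ J : FinGraph,
            J.verts ⊆ G.verts ∧ J.edges ⊆ G.edges ∧ G.young ∈ J.verts ∧
            x = lamAux r θ n (J.del G.young) - θ * (J.deg G.young : ℝ) }
    else 0

/-- The quantity `λ_{r,θ}(H,π)` for the ordered graph `H` (ordered by `ℕ`). -/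
noncomputable def lam (r : ℕ) (θ : ℝ) (G : FinGraph) : ℝ := lamAux r θ G.verts.card G

open Finset

/-! Unfolding the recursion, `θ ↦ λ_{r,θ}(H)` is obtained from the same functions for smaller
graphs by adding integer affine functions of `θ`, multiplying by the natural number `r - 1`, and
taking minima over the finitely many subgraphs `J`. Minima of finitely many integer affine
functions are closed under all three operations, since adding a constant and scaling by a
nonnegative number both commute with `min`. -/

lemma add_finset_inf' {α ι : Type*} [LinearOrder α] [Add α] [AddLeftMono α] (c : α)
    (s : Finset ι) (hs : s.Nonempty) (g : ι → α) :
    c + s.inf' hs g = s.inf' hs (fun i => c + g i) :=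
  apply_inf'_eq_inf'_comp hs (c + ·) fun x y => (min_add_add_left c x y).symm

def IsIntAffineMin (f : ℝ → ℝ) : Prop :=
  ∃ S : Finset (ℤ × ℤ), ∃ hS : S.Nonempty,
    ∀ θ, f θ = S.inf' hS (fun p => (p.1 : ℝ) + p.2 * θ)

lemma isIntAffineMin_affine (a b : ℤ) : IsIntAffineMin (fun θ => a + b * θ) :=
  ⟨{(a, b)}, singleton_nonempty _, fun θ => by simp⟩

lemma isIntAffineMin_finset_inf' {ι : Type*} {f : ι → ℝ → ℝ}
    (hf : ∀ i, IsIntAffineMin (f i)) (s : Finset ι) (hs : s.Nonempty) :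
    IsIntAffineMin (fun θ => s.inf' hs (f · θ)) := by
  choose S hS hfS using hf
  refine ⟨s.biUnion S, hs.biUnion fun i _ => hS i, fun θ => ?_⟩
  rw [inf'_biUnion _ hs hS]
  simp only [hfS]

lemma isIntAffineMin_csInf_image {ι : Type*} {f : ι → ℝ → ℝ}
    (hf : ∀ i, IsIntAffineMin (f i)) {s : Set ι} (hs : s.Finite) (hne : s.Nonempty) :
    IsIntAffineMin (fun θ => sInf ((f · θ) '' s)) := by
  convert isIntAffineMin_finset_inf' hf hs.toFinset (hs.toFinset_nonempty.mpr hne) using 2 with θ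
  rw [inf'_eq_csInf_image, hs.coe_toFinset]

namespace IsIntAffineMin

variable {f g : ℝ → ℝ}

lemma affine_add (hf : IsIntAffineMin f) (a b : ℤ) :
    IsIntAffineMin (fun θ => a + b * θ + f θ) := by
  obtain ⟨S, hS, hfS⟩ := hf
  convert isIntAffineMin_finset_inf'
    (fun p : ℤ × ℤ => isIntAffineMin_affine (a + p.1) (b + p.2)) S hS using 2 with θ
  rw [hfS, add_finset_inf']
  refine inf'_congr hS rfl fun p _ => ?_
  push_cast
  ring

lemma add (hf : IsIntAffineMin f) (hg : IsIntAffineMin g) :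
    IsIntAffineMin (fun θ => f θ + g θ) := by
  obtain ⟨S, hS, hfS⟩ := hf
  convert isIntAffineMin_finset_inf' (fun p : ℤ × ℤ => hg.affine_add p.1 p.2) S hS
    using 2 with θ
  rw [hfS, add_comm, add_finset_inf']
  exact inf'_congr hS rfl fun p _ => add_comm _ _

lemma nat_mul (hf : IsIntAffineMin f) (n : ℕ) : IsIntAffineMin (fun θ => n * f θ) := by
  obtain ⟨S, hS, hfS⟩ := hf
  convert isIntAffineMin_finset_inf'
    (fun p : ℤ × ℤ => isIntAffineMin_affine (n * p.1) (n * p.2)) S hS using 2 with θ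
  rw [hfS, ← nsmul_eq_mul, nsmul_inf']
  refine inf'_congr hS rfl fun p _ => ?_
  rw [nsmul_eq_mul]
  push_cast
  ring

lemma continuous (hf : IsIntAffineMin f) : Continuous f := by
  obtain ⟨S, hS, hfS⟩ := hf
  rw [funext hfS]
  exact Continuous.finset_inf'_apply hS fun p _ => by fun_prop

end IsIntAffineMin

namespace FinGraph

lemma ext {G H : FinGraph} (hv : G.verts = H.verts) (he : G.edges = H.edges) : G = H := by
  cases G
  cases H
  simp_all

def subgraphsContaining (G : FinGraph) (u : ℕ) : Set FinGraph :=
  {J | J.verts ⊆ G.verts ∧ J.edges ⊆ G.edges ∧ u ∈ J.verts}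

lemma finite_subgraphsContaining (G : FinGraph) (u : ℕ) :
    (G.subgraphsContaining u).Finite := by
  have hinj : Function.Injective fun J : FinGraph => (J.verts, J.edges) :=
    fun J K h => ext (Prod.ext_iff.mp h).1 (Prod.ext_iff.mp h).2
  refine ((G.verts.powerset ×ˢ G.edges.powerset).finite_toSet.preimage hinj.injOn).subset ?_
  rintro J ⟨hv, he, -⟩
  simp [hv, he]

lemma young_mem {G : FinGraph} (hG : G.verts.Nonempty) : G.young ∈ G.verts :=
  Nat.sInf_mem (coe_nonempty.mpr hG)

end FinGraph

lemma lamAux_succ_of_nonempty (r : ℕ) (θ : ℝ) (n : ℕ) {G : FinGraph}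
    (hG : G.verts.Nonempty) :
    lamAux r θ (n + 1) G =
      1 + (lamAux r θ n (G.del G.young) - θ * G.deg G.young) + ((r : ℝ) - 1) *
        sInf ((fun J => lamAux r θ n (J.del G.young) - θ * J.deg G.young) ''
          G.subgraphsContaining G.young) := by
  rw [lamAux, if_pos hG]
  congr 3
  ext x
  simp only [FinGraph.subgraphsContaining, Set.mem_ofPred_eq, Set.mem_image]
  constructor
  · rintro ⟨J, hv, he, hu, rfl⟩
    exact ⟨J, ⟨hv, he, hu⟩, rfl⟩
  · rintro ⟨J, ⟨hv, he, hu⟩, rfl⟩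
    exact ⟨J, hv, he, hu, rfl⟩

lemma lamAux_isIntAffineMin {r : ℕ} (hr : 1 ≤ r) (n : ℕ) (G : FinGraph) :
    IsIntAffineMin (fun θ => lamAux r θ n G) := by
  induction n generalizing G with
  | zero => simpa [lamAux] using isIntAffineMin_affine 0 0
  | succ n ih =>
    by_cases hG : G.verts.Nonempty
    · simp only [lamAux_succ_of_nonempty r _ n hG]
      set u := G.young
      have hdel : IsIntAffineMin fun θ => 1 + (lamAux r θ n (G.del u) - θ * G.deg u) := by
        convert (ih (G.del u)).affine_add 1 (-G.deg u) using 2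
        push_cast
        ring
      have hmin : IsIntAffineMin fun θ =>
          sInf ((fun J => lamAux r θ n (J.del u) - θ * J.deg u) '' G.subgraphsContaining u) := by
        refine isIntAffineMin_csInf_image (fun J => ?_) (G.finite_subgraphsContaining u)
          ⟨G, subset_rfl, subset_rfl, FinGraph.young_mem hG⟩
        convert (ih (J.del u)).affine_add 0 (-J.deg u) using 2
        push_cast
        ring
      have hr' : (r : ℝ) - 1 = (r - 1 : ℕ) := by rw [Nat.cast_sub hr, Nat.cast_one]
      simp only [hr']
      exact hdel.add (hmin.nat_mul _)
    · simpa [lamAux, hG] using isIntAffineMin_affine 0 0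

lemma lam_isIntAffineMin {r : ℕ} (hr : 1 ≤ r) (G : FinGraph) :
    IsIntAffineMin (fun θ => lam r θ G) :=
  lamAux_isIntAffineMin hr G.verts.card G

theorem lam_continuous_piecewise_linear_general (r : ℕ) (hr : 2 ≤ r)
    (G : FinGraph) :
    ContinuousOn (fun θ : ℝ => lam r θ G) (Set.Icc (0 : ℝ) 2) ∧
    ∃ S : Finset (ℤ × ℤ), ∃ hS : S.Nonempty, ∀ θ ∈ Set.Icc (0 : ℝ) 2,
      lam r θ G = S.inf' hS (fun p => (p.1 : ℝ) + (p.2 : ℝ) * θ) := by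
  have hlam := lam_isIntAffineMin (one_le_two.trans hr) G
  obtain ⟨S, hS, hval⟩ := id hlam
  exact ⟨hlam.continuous.continuousOn, S, hS, fun θ _ => hval θ⟩

/-- For any nonempty ordered graph `(H,π)` and any `r ≥ 2`, the function
`θ ↦ λ_{r,θ}(H,π)` on `[0,2]` is continuous and piecewise linear with integer
coefficients: it is the pointwise minimum of finitely many linear functions
`θ ↦ a + b·θ` with `a, b ∈ ℤ`. -/
theorem lam_continuous_piecewise_linear (r : ℕ) (hr : 2 ≤ r)
    (G : FinGraph) (hG : G.verts.Nonempty) :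
    ContinuousOn (fun θ : ℝ => lam r θ G) (Set.Icc (0 : ℝ) 2) ∧
    ∃ S : Finset (ℤ × ℤ), ∃ hS : S.Nonempty, ∀ θ ∈ Set.Icc (0 : ℝ) 2,
      lam r θ G = S.inf' hS (fun p => (p.1 : ℝ) + (p.2 : ℝ) * θ) :=
  lam_continuous_piecewise_linear_general r hr G
end

section
/- For integers ℓ ≥ 3, k ≥ 3, r ≥ 2, the graph C_{ℓ,k}^{r*} is balanced: for every nonempty subgraph H ⊆ C_{ℓ,k}^{r*} one has e(H)/v(H) ≤ e(C_{ℓ,k}^{r*})/v(C_{ℓ,k}^{r*}). -/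
/-!
Deleting a vertex of degree at most one loses at most one edge, and `C_{ℓ,k}^{r*}` has at least
as many edges as vertices, so it suffices to bound the density of subgraphs `H` of minimum degree
at least two. In such an `H` an internal vertex of a petal path keeps both of its neighbours, so
`H` contains every petal path it meets completely, together with the center and the hub of that
petal. If `H` meets `t` paths in `s` petals, then `v(H) ≥ 1 + s + t(ℓ-2)` and
`e(H) ≤ t(ℓ-1) + s`; as `t ≤ rs` and `s ≤ k*`, the ratio of these bounds is at most the density of
the whole graph, which is the case `s = k*`, `t = rk*`.
-/

/-- Vertex type of the graph `C_{ℓ,k}^{r+}` (and of `C_{ℓ,k}^{r*}`): a common center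
(`none`), and for each of the `k* = r(k-1)+1` petals an outer endpoint (`some (p, none)`)
and, for each of the `r` paths of length `ℓ-1` of the petal, `ℓ-2` internal path vertices
(`some (p, some (q, i))`). -/
abbrev CV (ℓ k r : ℕ) : Type :=
  Option (Fin (r * (k - 1) + 1) × Option (Fin r × Fin (ℓ - 2)))

/-- Base (one-directional) adjacency: center–first internal vertex, consecutive internal
vertices, last internal vertex–outer endpoint of the petal, and (when `star = true`)
the `k*` "missing edges" center–outer endpoint forming the center star. -/
def cBase (ℓ k r : ℕ) (star : Bool) : CV ℓ k r → CV ℓ k r → Prop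
  | none, some (_, some (_, i)) => (i : ℕ) = 0
  | some (p, some (q, i)), some (p', some (q', j)) => p = p' ∧ q = q' ∧ (j : ℕ) = (i : ℕ) + 1
  | some (p, some (_, i)), some (p', none) => p = p' ∧ (i : ℕ) = ℓ - 3
  | none, some (_, none) => star = true
  | _, _ => False

/-- The graph `C_{ℓ,k}^{r+}` (for `star = false`) resp. `C_{ℓ,k}^{r*}` (for `star = true`):
`k* = r(k-1)+1` petals (each consisting of `r` internally disjoint paths of length `ℓ-1`
between two endpoints) joined at a common center vertex, with the center star added if
`star = true`. -/
def CGraph (ℓ k r : ℕ) (star : Bool) : SimpleGraph (CV ℓ k r) where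
  Adj x y := x ≠ y ∧ (cBase ℓ k r star x y ∨ cBase ℓ k r star y x)
  symm := ⟨fun _ _ h => ⟨h.1.symm, h.2.symm⟩⟩
  loopless := ⟨fun _ h => h.1 rfl⟩

noncomputable instance (ℓ k r : ℕ) (s : Bool) : DecidableRel (CGraph ℓ k r s).Adj :=
  fun _ _ => Classical.dec _

lemma Nat.forall_le_of_interior_step {n a : ℕ} {S : ℕ → Prop} (ha0 : 0 < a) (ha : a < n)
    (hS : S a) (step : ∀ c, 0 < c → c < n → S c → S (c - 1) ∧ S (c + 1)) : ∀ b ≤ n, S b := by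
  have up : ∀ d, a + d ≤ n → S (a + d) := by
    intro d
    induction d with
    | zero => exact fun _ ↦ hS
    | succ d ih => exact fun h ↦ (step _ (by omega) (by omega) (ih (by omega))).2
  have down : ∀ d ≤ a, S (a - d) := by
    intro d
    induction d with
    | zero => exact fun _ ↦ hS
    | succ d ih =>
      intro h
      simpa [Nat.sub_sub] using (step (a - d) (by omega) (by omega) (ih (by omega))).1
  intro b hb
  rcases le_total a b with h | h
  · simpa [Nat.add_sub_cancel' h] using up (b - a) (by omega)
  · simpa [Nat.sub_sub_self h] using down (a - b) (Nat.sub_le a b)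

namespace SimpleGraph.Subgraph

variable {V : Type*} {G : SimpleGraph V}

theorem ncard_edgeSet_le_deleteVerts_add [Finite V] (H : G.Subgraph) (v : V) :
    H.edgeSet.ncard ≤ (H.deleteVerts {v}).edgeSet.ncard + (H.neighborSet v).ncard := by
  have hsub : H.edgeSet ⊆ (H.deleteVerts {v}).edgeSet ∪ (fun w ↦ s(v, w)) '' H.neighborSet v := by
    intro e he
    induction e with
    | _ a b =>
      by_cases hva : v = a
      · exact Or.inr ⟨b, by rwa [hva], by rw [hva]⟩
      by_cases hvb : v = b
      · exact Or.inr ⟨a, by rw [hvb]; exact H.adj_symm he, by rw [hvb, Sym2.eq_swap]⟩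
      exact Or.inl (deleteVerts_adj.2 ⟨he.fst_mem, Ne.symm hva, he.snd_mem, Ne.symm hvb, he⟩)
  calc H.edgeSet.ncard ≤ _ := Set.ncard_le_ncard hsub
    _ ≤ _ := Set.ncard_union_le _ _
    _ ≤ _ := by grw [Set.ncard_image_le (Set.toFinite _)]

theorem adj_of_ncard_neighborSet_le {H : G.Subgraph} {v w : V} (hfin : (G.neighborSet v).Finite)
    (hdeg : (G.neighborSet v).ncard ≤ (H.neighborSet v).ncard) (hvw : G.Adj v w) : H.Adj v w :=
  (Set.eq_of_subset_of_ncard_le (H.neighborSet_subset v) hdeg hfin).ge hvw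

theorem ncard_edgeSet_mul_le_of_two_le_degree [Finite V] {a b : ℕ} (hba : b ≤ a)
    (h : ∀ H : G.Subgraph, (∀ v ∈ H.verts, 2 ≤ (H.neighborSet v).ncard) →
      H.edgeSet.ncard * b ≤ a * H.verts.ncard)
    (H : G.Subgraph) : H.edgeSet.ncard * b ≤ a * H.verts.ncard := by
  induction hn : H.verts.ncard using Nat.strong_induction_on generalizing H with
  | _ n ih =>
    by_cases hmin : ∀ v ∈ H.verts, 2 ≤ (H.neighborSet v).ncard
    · exact hn ▸ h H hmin
    push Not at hmin
    obtain ⟨v, hv, hdeg⟩ := hmin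
    have hn' : (H.deleteVerts {v}).verts.ncard = n - 1 := by
      rw [deleteVerts_verts, Set.ncard_sdiff_singleton_of_mem hv, hn]
    have hpos : 0 < n := hn ▸ (Set.ncard_pos).2 ⟨v, hv⟩
    have ih' := ih (n - 1) (by omega) _ hn'
    have hdel := H.ncard_edgeSet_le_deleteVerts_add v
    calc H.edgeSet.ncard * b ≤ ((H.deleteVerts {v}).edgeSet.ncard + 1) * b := by gcongr; omega
      _ ≤ a * (n - 1) + a := by rw [add_mul, one_mul]; exact add_le_add ih' hba
      _ = a * n := by rw [← mul_add_one]; congr 1; omega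

end SimpleGraph.Subgraph

namespace CStar

variable {ℓ k r : ℕ}

abbrev Petal (k r : ℕ) : Type := Fin (r * (k - 1) + 1)

def hub (p : Petal k r) : CV ℓ k r := some (p, none)

def internal (p : Petal k r) (q : Fin r) (i : Fin (ℓ - 2)) : CV ℓ k r :=
  some (p, some (q, i))

/-- The `a`-th vertex of path `q` of petal `p`, from the center (`a = 0`) to the hub
(`a = ℓ - 1`). -/
def pathVertex (p : Petal k r) (q : Fin r) (a : ℕ) : CV ℓ k r :=
  if a = 0 then none else if h : a - 1 < ℓ - 2 then internal p q ⟨a - 1, h⟩ else hub p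

def level : CV ℓ k r → ℕ
  | none => 0
  | some (_, none) => ℓ - 1
  | some (_, some (_, i)) => i + 1

def pathEdge (x : (Petal k r × Fin r) × Fin (ℓ - 1)) : Sym2 (CV ℓ k r) :=
  s(pathVertex x.1.1 x.1.2 x.2, pathVertex x.1.1 x.1.2 (x.2 + 1))

def starEdge (p : Petal k r) : Sym2 (CV ℓ k r) := s(none, hub p)

@[simp] lemma pathVertex_succ (p : Petal k r) (q : Fin r) (i : Fin (ℓ - 2)) :
    pathVertex p q (i + 1) = internal (k := k) p q i := by
  simp [pathVertex]

lemma pathVertex_last (hℓ : 2 ≤ ℓ) (p : Petal k r) (q : Fin r) :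
    pathVertex (ℓ := ℓ) p q (ℓ - 1) = hub p := by
  unfold pathVertex; split_ifs <;> first | omega | rfl

lemma level_pathVertex (p : Petal k r) (q : Fin r) {a : ℕ} (ha : a ≤ ℓ - 1) :
    level (pathVertex (ℓ := ℓ) (k := k) (r := r) p q a) = a := by
  unfold pathVertex; split_ifs <;> simp [level, internal, hub] <;> omega

lemma pathVertex_inj {p p' : Petal k r} {q q' : Fin r} {a b : ℕ} (ha0 : 0 < a)
    (ha : a < ℓ - 1) (hb : b ≤ ℓ - 1) (h : pathVertex (ℓ := ℓ) p q a = pathVertex p' q' b) :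
    p = p' ∧ q = q' ∧ a = b := by
  have hab := congrArg level h
  rw [level_pathVertex _ _ ha.le, level_pathVertex _ _ hb] at hab
  subst hab
  unfold pathVertex at h
  split_ifs at h <;> first | omega | simpa [internal] using h

lemma adj_pathVertex (p : Petal k r) (q : Fin r) {j : ℕ} (hj : j < ℓ - 1) :
    (CGraph ℓ k r true).Adj (pathVertex p q j) (pathVertex p q (j + 1)) := by
  refine ⟨?_, Or.inl ?_⟩ <;> unfold pathVertex <;> split_ifs <;>
    simp_all [cBase, internal, hub] <;> omega

lemma adj_center_hub (p : Petal k r) : (CGraph ℓ k r true).Adj none (hub p) :=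
  ⟨by simp [hub], Or.inl rfl⟩

lemma cBase_mem_range {a b : CV ℓ k r} (h : cBase ℓ k r true a b) :
    s(a, b) ∈ Set.range pathEdge ∪ Set.range starEdge := by
  rcases a with _ | ⟨p, _ | ⟨q, i⟩⟩ <;> rcases b with _ | ⟨p', _ | ⟨q', j⟩⟩ <;>
    simp only [cBase] at h
  · exact Or.inr ⟨p', rfl⟩
  · refine Or.inl ⟨((p', q'), ⟨j, by omega⟩), ?_⟩
    simp only [pathEdge]
    rw [pathVertex_succ, h]
    rfl
  · obtain ⟨rfl, hi⟩ := h
    refine Or.inl ⟨((p, q), ⟨i + 1, by omega⟩), ?_⟩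
    have hlast : (i : ℕ) + 1 + 1 = ℓ - 1 := by omega
    simp only [pathEdge]
    rw [pathVertex_succ, hlast, pathVertex_last (by omega)]
    rfl
  · obtain ⟨rfl, rfl, hj⟩ := h
    refine Or.inl ⟨((p, q), ⟨j, by omega⟩), ?_⟩
    simp only [pathEdge]
    rw [pathVertex_succ, hj, pathVertex_succ]
    rfl

lemma edgeSet_eq :
    (CGraph ℓ k r true).edgeSet = Set.range pathEdge ∪ Set.range starEdge := by
  apply subset_antisymm
  · intro e he
    induction e with | _ a b => ?_
    obtain ⟨-, h | h⟩ := he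
    · exact cBase_mem_range h
    · rw [Sym2.eq_swap]
      exact cBase_mem_range h
  · rintro e (⟨x, rfl⟩ | ⟨p, rfl⟩)
    · exact adj_pathVertex x.1.1 x.1.2 x.2.isLt
    · exact adj_center_hub p

lemma map_level_pathEdge (x : (Petal k r × Fin r) × Fin (ℓ - 1)) :
    (pathEdge x).map level = s((x.2 : ℕ), x.2 + 1) := by
  rw [pathEdge, Sym2.map_mk, level_pathVertex _ _ x.2.isLt.le,
    level_pathVertex _ _ x.2.isLt]

lemma pathEdge_injective (hℓ : 3 ≤ ℓ) :
    Function.Injective (pathEdge (ℓ := ℓ) (k := k) (r := r)) := by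
  rintro ⟨⟨p, q⟩, j⟩ ⟨⟨p', q'⟩, j'⟩ h
  have hj : j = j' := by
    have := congrArg (Sym2.map level) h
    rw [map_level_pathEdge, map_level_pathEdge, Sym2.eq_iff] at this
    dsimp only at this
    omega
  subst hj
  simp only [pathEdge] at h
  obtain ⟨h0, h1⟩ | ⟨h0, -⟩ := Sym2.eq_iff.1 h
  · have hpq : p = p' ∧ q = q' := by
      by_cases hj0 : (j : ℕ) = 0
      · exact (pathVertex_inj (by omega) (by omega) j.isLt h1).imp_right And.left
      · exact (pathVertex_inj (by omega) j.isLt j.isLt.le h0).imp_right And.left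
    obtain ⟨rfl, rfl⟩ := hpq
    rfl
  · have := congrArg level h0
    rw [level_pathVertex _ _ j.isLt.le, level_pathVertex _ _ j.isLt] at this
    omega

lemma starEdge_injective : Function.Injective (starEdge (ℓ := ℓ) (k := k) (r := r)) := by
  intro p p' h
  simpa [starEdge, hub] using h

lemma disjoint_range_pathEdge_starEdge (hℓ : 3 ≤ ℓ) :
    Disjoint (Set.range (pathEdge (ℓ := ℓ) (k := k) (r := r))) (Set.range starEdge) := by
  rw [Set.disjoint_range_iff]
  intro x p h
  have := congrArg (Sym2.map level) h
  have hx := x.2.isLt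
  simp [map_level_pathEdge, starEdge, level, hub] at this
  omega

lemma ncard_edgeSet (hℓ : 3 ≤ ℓ) :
    (CGraph ℓ k r true).edgeSet.ncard = (r * (k - 1) + 1) * (r * (ℓ - 1) + 1) := by
  rw [edgeSet_eq, Set.ncard_union_eq (disjoint_range_pathEdge_starEdge hℓ),
    Set.ncard_range_of_injective (pathEdge_injective hℓ),
    Set.ncard_range_of_injective starEdge_injective]
  simp only [Nat.card_eq_fintype_card, Fintype.card_prod, Fintype.card_fin]
  ring

lemma card_CV : Fintype.card (CV ℓ k r) = (r * (k - 1) + 1) * (r * (ℓ - 2) + 1) + 1 := by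
  simp [Fintype.card_option, Fintype.card_prod, Fintype.card_fin]

lemma card_CV_le_ncard_edgeSet (hℓ : 3 ≤ ℓ) (hr : 1 ≤ r) :
    Fintype.card (CV ℓ k r) ≤ (CGraph ℓ k r true).edgeSet.ncard := by
  rw [card_CV, ncard_edgeSet hℓ, show ℓ - 1 = ℓ - 2 + 1 by omega]
  calc (r * (k - 1) + 1) * (r * (ℓ - 2) + 1) + 1
      ≤ (r * (k - 1) + 1) * (r * (ℓ - 2) + 1) + (r * (k - 1) + 1) * r :=
        Nat.add_le_add_left (Nat.one_le_iff_ne_zero.2 (by positivity)) _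
    _ = (r * (k - 1) + 1) * (r * (ℓ - 2 + 1) + 1) := by ring

lemma neighborSet_internal_subset (p : Petal k r) (q : Fin r) (i : Fin (ℓ - 2)) :
    (CGraph ℓ k r true).neighborSet (internal p q i) ⊆
      {pathVertex p q i, pathVertex p q (i + 2)} := by
  intro y hy
  have he : s(internal p q i, y) ∈ (CGraph ℓ k r true).edgeSet := hy
  rw [edgeSet_eq, ← pathVertex_succ] at he
  have hi := i.isLt
  obtain ⟨⟨⟨p', q'⟩, j⟩, h⟩ | ⟨p', h⟩ := he
  · simp only [pathEdge] at h
    obtain ⟨h0, rfl⟩ | ⟨rfl, h1⟩ := Sym2.eq_iff.1 h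
    · obtain ⟨rfl, rfl, hj⟩ := pathVertex_inj (by omega) (by omega) j.isLt.le h0.symm
      exact Or.inr (by rw [← hj, add_assoc]; rfl)
    · obtain ⟨rfl, rfl, hj⟩ := pathVertex_inj (by omega) (by omega) j.isLt h1.symm
      exact Or.inl (by rw [show (j : ℕ) = i by omega])
  · simp [starEdge, internal, hub, pathVertex_succ] at h

lemma ncard_neighborSet_internal_le (p : Petal k r) (q : Fin r) (i : Fin (ℓ - 2)) :
    ((CGraph ℓ k r true).neighborSet (internal p q i)).ncard ≤ 2 :=
  (Set.ncard_le_ncard (neighborSet_internal_subset p q i)).trans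
    ((Set.ncard_insert_le _ _).trans (by simp))

def pathsIn (H : (CGraph ℓ k r true).Subgraph) : Set (Petal k r × Fin r) :=
  {pq | ∀ a ≤ ℓ - 1, pathVertex pq.1 pq.2 a ∈ H.verts}

def petalsIn (H : (CGraph ℓ k r true).Subgraph) : Set (Petal k r) :=
  Prod.fst '' pathsIn H

lemma hub_mem_of_mem_petalsIn (hℓ : 2 ≤ ℓ) {H : (CGraph ℓ k r true).Subgraph} {p : Petal k r}
    (hp : p ∈ petalsIn H) : hub p ∈ H.verts := by
  obtain ⟨⟨p, q⟩, hpq, rfl⟩ := hp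
  simpa [pathVertex_last hℓ] using hpq (ℓ - 1) le_rfl

lemma internal_mem_of_mem_pathsIn {H : (CGraph ℓ k r true).Subgraph} {p : Petal k r} {q : Fin r}
    (hpq : (p, q) ∈ pathsIn H) (i : Fin (ℓ - 2)) : internal p q i ∈ H.verts := by
  simpa using hpq (i + 1) (by omega)

lemma ncard_pathsIn_le (H : (CGraph ℓ k r true).Subgraph) :
    (pathsIn H).ncard ≤ r * (petalsIn H).ncard := by
  have hsub : pathsIn H ⊆ petalsIn H ×ˢ Set.univ := fun pq hpq ↦ ⟨⟨pq, hpq, rfl⟩, trivial⟩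
  calc (pathsIn H).ncard ≤ (petalsIn H ×ˢ (Set.univ : Set (Fin r))).ncard :=
        Set.ncard_le_ncard hsub
    _ = r * (petalsIn H).ncard := by simp [Set.ncard_prod, mul_comm]

lemma ncard_petalsIn_le (H : (CGraph ℓ k r true).Subgraph) :
    (petalsIn H).ncard ≤ r * (k - 1) + 1 := by
  simpa using Set.ncard_le_ncard (Set.subset_univ (petalsIn H))

section MinDegreeTwo

variable {H : (CGraph ℓ k r true).Subgraph} (hmin : ∀ v ∈ H.verts, 2 ≤ (H.neighborSet v).ncard)
include hmin

lemma adj_of_internal_mem {p : Petal k r} {q : Fin r} {i : Fin (ℓ - 2)} {y : CV ℓ k r}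
    (hx : internal p q i ∈ H.verts) (hy : (CGraph ℓ k r true).Adj (internal p q i) y) :
    H.Adj (internal p q i) y :=
  SimpleGraph.Subgraph.adj_of_ncard_neighborSet_le (Set.toFinite _)
    ((ncard_neighborSet_internal_le p q i).trans (hmin _ hx)) hy

lemma mem_pathsIn_of_pathVertex_mem {p : Petal k r} {q : Fin r} {a : ℕ} (ha0 : 0 < a)
    (ha : a < ℓ - 1) (hmem : pathVertex p q a ∈ H.verts) : (p, q) ∈ pathsIn H := by
  refine Nat.forall_le_of_interior_step ha0 ha hmem fun c hc0 hc hcmem ↦ ?_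
  obtain ⟨i, rfl⟩ : ∃ i : Fin (ℓ - 2), (i : ℕ) + 1 = c := ⟨⟨c - 1, by omega⟩, by simp; omega⟩
  rw [pathVertex_succ] at hcmem
  constructor
  · have hadj := (pathVertex_succ p q i ▸ adj_pathVertex p q (j := i) (by omega)).symm
    simpa using (adj_of_internal_mem hmin hcmem hadj).snd_mem
  · have hadj := pathVertex_succ p q i ▸ adj_pathVertex p q (j := i + 1) (by omega)
    exact (adj_of_internal_mem hmin hcmem hadj).snd_mem

lemma mem_pathsIn_of_internal_mem {p : Petal k r} {q : Fin r} {i : Fin (ℓ - 2)}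
    (hx : internal p q i ∈ H.verts) : (p, q) ∈ pathsIn H :=
  mem_pathsIn_of_pathVertex_mem hmin (a := i + 1) (by omega) (by omega) (by simpa using hx)

lemma mem_petalsIn_of_hub_mem {p : Petal k r} (hx : hub p ∈ H.verts) : p ∈ petalsIn H := by
  obtain ⟨y, hy, hyne⟩ := Set.exists_ne_of_one_lt_ncard (hmin _ hx) none
  obtain ⟨-, h | h⟩ := H.adj_sub hy
  all_goals rcases y with _ | ⟨p', _ | ⟨q, i⟩⟩ <;> simp [cBase, hub] at h hyne
  obtain ⟨rfl, -⟩ := h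
  exact ⟨(p', q), mem_pathsIn_of_internal_mem hmin hy.snd_mem, rfl⟩

lemma center_mem {x : CV ℓ k r} (hx : x ∈ H.verts) : (none : CV ℓ k r) ∈ H.verts := by
  rcases x with _ | ⟨p, _ | ⟨q, i⟩⟩
  · exact hx
  · obtain ⟨_, hpq, -⟩ := mem_petalsIn_of_hub_mem hmin hx
    exact hpq 0 (Nat.zero_le _)
  · exact mem_pathsIn_of_internal_mem hmin hx 0 (Nat.zero_le _)

lemma edgeSet_subset_image (hℓ : 3 ≤ ℓ) :
    H.edgeSet ⊆ pathEdge '' (pathsIn H ×ˢ Set.univ) ∪ starEdge '' petalsIn H := by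
  intro e he
  have heG := H.edgeSet_subset he
  rw [edgeSet_eq] at heG
  obtain ⟨⟨⟨p, q⟩, j⟩, rfl⟩ | ⟨p, rfl⟩ := heG
  · have hadj : H.Adj (pathVertex p q j) (pathVertex p q (j + 1)) := he
    refine Or.inl ⟨_, ⟨?_, trivial⟩, rfl⟩
    by_cases hj : (j : ℕ) = 0
    · exact mem_pathsIn_of_pathVertex_mem hmin (by omega) (by omega) hadj.snd_mem
    · exact mem_pathsIn_of_pathVertex_mem hmin (by omega) j.isLt hadj.fst_mem
  · have hadj : H.Adj none (hub p) := he
    exact Or.inr ⟨p, mem_petalsIn_of_hub_mem hmin hadj.snd_mem, rfl⟩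

lemma ncard_edgeSet_le (hℓ : 3 ≤ ℓ) :
    H.edgeSet.ncard ≤ (pathsIn H).ncard * (ℓ - 1) + (petalsIn H).ncard := by
  calc H.edgeSet.ncard
      ≤ (pathEdge '' (pathsIn H ×ˢ Set.univ) ∪ starEdge '' petalsIn H).ncard :=
        Set.ncard_le_ncard (edgeSet_subset_image hmin hℓ)
    _ ≤ (pathEdge '' (pathsIn H ×ˢ Set.univ)).ncard + (starEdge '' petalsIn H).ncard :=
        Set.ncard_union_le _ _
    _ ≤ (pathsIn H ×ˢ (Set.univ : Set (Fin (ℓ - 1)))).ncard + (petalsIn H).ncard := by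
        gcongr <;> exact Set.ncard_image_le (Set.toFinite _)
    _ = (pathsIn H).ncard * (ℓ - 1) + (petalsIn H).ncard := by simp [Set.ncard_prod]

lemma ncard_verts_ge (hℓ : 2 ≤ ℓ) (hne : H.verts.Nonempty) :
    1 + (petalsIn H).ncard + (pathsIn H).ncard * (ℓ - 2) ≤ H.verts.ncard := by
  let internals : Set (CV ℓ k r) :=
    (fun x ↦ internal x.1.1 x.1.2 x.2) '' (pathsIn H ×ˢ (Set.univ : Set (Fin (ℓ - 2))))
  have hsub : insert none (hub '' petalsIn H ∪ internals) ⊆ H.verts := by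
    rintro y (rfl | ⟨p, hp, rfl⟩ | ⟨⟨pq, i⟩, ⟨hpq, -⟩, rfl⟩)
    · exact center_mem hmin hne.some_mem
    · exact hub_mem_of_mem_petalsIn hℓ hp
    · exact internal_mem_of_mem_pathsIn hpq i
  have hdisj : Disjoint (hub '' petalsIn H) internals := by
    rw [Set.disjoint_left]
    rintro y ⟨p, -, rfl⟩ ⟨x, -, h⟩
    simp [hub, internal] at h
  have hcard : (insert none (hub '' petalsIn H ∪ internals)).ncard =
      1 + (petalsIn H).ncard + (pathsIn H).ncard * (ℓ - 2) := by
    have hcenter : none ∉ hub '' petalsIn H ∪ internals := by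
      rintro (⟨p, -, h⟩ | ⟨x, -, h⟩) <;> simp [hub, internal] at h
    rw [Set.ncard_insert_of_notMem hcenter, Set.ncard_union_eq hdisj,
      Set.ncard_image_of_injective _ (fun a b h ↦ by simpa [hub] using h),
      Set.ncard_image_of_injective _
        (fun a b h ↦ by simpa [internal, Prod.ext_iff, and_assoc] using h)]
    simp [Set.ncard_prod]
    omega
  exact hcard ▸ Set.ncard_le_ncard hsub

end MinDegreeTwo

lemma density_le_of_petal_counts {L K r t s e v : ℕ} (he : e ≤ t * (L + 1) + s)
    (hv : 1 + s + t * L ≤ v) (ht : t ≤ r * s) (hs : s ≤ K) :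
    e * (K * (r * L + 1) + 1) ≤ K * (r * (L + 1) + 1) * v := by
  have htK : t ≤ r * K := ht.trans (Nat.mul_le_mul_left r hs)
  calc e * (K * (r * L + 1) + 1) ≤ (t * (L + 1) + s) * (K * (r * L + 1) + 1) := by gcongr
    _ ≤ K * (r * (L + 1) + 1) * (1 + s + t * L) := by
      -- the difference is `K (r (L + 1) + 1) - t (L + 1) - s + (r s - t) K`
      nlinarith [Nat.mul_le_mul_right K ht, Nat.mul_le_mul_right (L + 1) htK]
    _ ≤ K * (r * (L + 1) + 1) * v := by gcongr

lemma ncard_edgeSet_mul_card_le (hℓ : 3 ≤ ℓ) {H : (CGraph ℓ k r true).Subgraph}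
    (hmin : ∀ v ∈ H.verts, 2 ≤ (H.neighborSet v).ncard) :
    H.edgeSet.ncard * Fintype.card (CV ℓ k r) ≤
      (CGraph ℓ k r true).edgeSet.ncard * H.verts.ncard := by
  rcases H.verts.eq_empty_or_nonempty with hempty | hne
  · obtain rfl := H.eq_bot_iff_verts_eq_empty.2 hempty
    simp
  have he := ncard_edgeSet_le hmin hℓ
  have hv := ncard_verts_ge hmin (by omega) hne
  rw [card_CV, ncard_edgeSet hℓ]
  obtain ⟨L, rfl⟩ : ∃ L, ℓ = L + 2 := ⟨ℓ - 2, by omega⟩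
  simp only [Nat.add_sub_cancel, show L + 2 - 1 = L + 1 by omega] at he hv ⊢
  exact density_le_of_petal_counts he hv (ncard_pathsIn_le H) (ncard_petalsIn_le H)

end CStar

theorem CStar_balanced_general (ℓ k r : ℕ) (hℓ : 3 ≤ ℓ) (hr : 2 ≤ r) :
    ∀ H : (CGraph ℓ k r true).Subgraph, H.verts.Nonempty →
      (H.edgeSet.ncard : ℚ) / (H.verts.ncard : ℚ) ≤
        ((CGraph ℓ k r true).edgeSet.ncard : ℚ) / (Fintype.card (CV ℓ k r) : ℚ) := by
  intro H hne
  rw [div_le_div_iff₀ (by exact_mod_cast (Set.ncard_pos).2 hne)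
    (by exact_mod_cast Fintype.card_pos)]
  exact_mod_cast SimpleGraph.Subgraph.ncard_edgeSet_mul_le_of_two_le_degree
    (CStar.card_CV_le_ncard_edgeSet hℓ (by omega)) (fun _ ↦ CStar.ncard_edgeSet_mul_card_le hℓ) H

/-- For `ℓ ≥ 3`, `k ≥ 3`, `r ≥ 2`, the graph `C_{ℓ,k}^{r*}` is
balanced: every nonempty subgraph `H` satisfies
`e(H)/v(H) ≤ e(C_{ℓ,k}^{r*})/v(C_{ℓ,k}^{r*})`. -/
theorem CStar_balanced (ℓ k r : ℕ) (hℓ : 3 ≤ ℓ) (hk : 3 ≤ k) (hr : 2 ≤ r) :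
    ∀ H : (CGraph ℓ k r true).Subgraph, H.verts.Nonempty →
      (H.edgeSet.ncard : ℚ) / (H.verts.ncard : ℚ) ≤
        ((CGraph ℓ k r true).edgeSet.ncard : ℚ) / (Fintype.card (CV ℓ k r) : ℚ) :=
  CStar_balanced_general ℓ k r hℓ hr
end

section
/- For integers ℓ ≥ 3 and r ≥ 2, the 2-density of the graph C_{ℓ,k}^{r+} equals (r(ℓ−1)−1)/(r(ℓ−2)), i.e., m₂(C_{ℓ,k}^{r+}) = max over subgraphs H with v(H) ≥ 3 of (e(H)−1)/(v(H)−2) = (r(ℓ−1)−1)/(r(ℓ−2)), with the maximum attained by a single petal. -/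
open Finset

/- A subset `E ⊆ range (n + 1)` is read as a set of edges of the path `0 — 1 — ⋯ — (n + 1)`,
edge `t` joining `t` and `t + 1`; the inner vertex `i + 1` is recorded as `i`, so the hypotheses
`hlo`, `hhi` say that `V` contains the inner endpoints of all edges in `E`. -/
section PathCounting

variable {n : ℕ} {E V : Finset ℕ}

theorem card_le_card_of_ne_range (hE : E ⊆ range (n + 1)) (hne : E ≠ range (n + 1))
    (hlo : ∀ t ∈ E, 0 < t → t - 1 ∈ V) (hhi : ∀ t ∈ E, t < n → t ∈ V) : #E ≤ #V := by
  have hgap : (range (n + 1) \ E).Nonempty :=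
    sdiff_nonempty.2 fun h => hne (hE.antisymm h)
  set s := (range (n + 1) \ E).min' hgap
  have hs : s < n + 1 ∧ s ∉ E := by simpa using min'_mem _ hgap
  -- edges before the first missing edge `s` go to their upper endpoint, later ones to their lower
  refine card_le_card_of_injOn (fun t => if t < s then t else t - 1) (fun t ht => ?_) ?_
  · have : t ≠ s := fun h => hs.2 (h ▸ ht)
    dsimp only
    split_ifs with h
    · exact hhi t ht (by omega)
    · exact hlo t ht (by omega)
  · intro a ha b hb hab
    have : a ≠ s := fun h => hs.2 (h ▸ ha)
    have : b ≠ s := fun h => hs.2 (h ▸ hb)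
    simp only at hab
    split_ifs at hab <;> omega

theorem card_lt_card_of_ends_notMem (hE : E ⊆ range (n + 1)) (hne : E.Nonempty) (h0 : 0 ∉ E)
    (hn : n ∉ E) (hlo : ∀ t ∈ E, 0 < t → t - 1 ∈ V) (hhi : ∀ t ∈ E, t < n → t ∈ V) :
    #E < #V := by
  set m := E.min' hne
  have hm : m ∈ E := min'_mem E hne
  have hm0 : 0 < m := Nat.pos_of_ne_zero fun h => h0 (h ▸ hm)
  have hnotMem : m - 1 ∉ E := fun h => by have : m ≤ m - 1 := min'_le E _ h; omega
  have hsub : insert (m - 1) E ⊆ V := by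
    intro t ht
    rcases mem_insert.1 ht with rfl | ht
    · exact hlo m hm hm0
    · have := mem_range.1 (hE ht)
      have : t ≠ n := fun h => hn (h ▸ ht)
      exact hhi t ht (by omega)
  calc #E < #(insert (m - 1) E) := by rw [card_insert_of_notMem hnotMem]; omega
    _ ≤ #V := card_le_card hsub

end PathCounting

theorem Set.ncard_eq_sum_ite {α : Type*} [Fintype α] (s : Set α) [DecidablePred (· ∈ s)] :
    s.ncard = ∑ a, if a ∈ s then 1 else 0 := by
  rw [Set.ncard_eq_toFinset_card', ← Finset.card_filter]
  congr
  ext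
  simp

theorem Fin.sum_univ_ite_eq_card_filter (n : ℕ) (P : ℕ → Prop) [DecidablePred P] :
    (∑ i : Fin n, if P i then 1 else 0) = #{i ∈ range n | P i} := by
  rw [card_filter, Fin.sum_univ_eq_sum_range (fun i => if P i then 1 else 0)]

namespace CGraph

section Coordinates

variable (ℓ : ℕ) {k r : ℕ}

/-- The vertex at distance `j` from the center along path `q` of petal `p`
(the outer endpoint of the petal for `j ≥ ℓ - 1`). -/
def pathVertex (p : Fin (r * (k - 1) + 1)) (q : Fin r) : ℕ → CV ℓ k r
  | 0 => none
  | j + 1 => if h : j < ℓ - 2 then some (p, some (q, ⟨j, h⟩)) else some (p, none)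

def pathEdge (p : Fin (r * (k - 1) + 1)) (q : Fin r) (t : ℕ) : Sym2 (CV ℓ k r) :=
  s(pathVertex ℓ p q t, pathVertex ℓ p q (t + 1))

/-- The distance of a vertex from the center. -/
def level : CV ℓ k r → ℕ
  | none => 0
  | some (_, some (_, i)) => i + 1
  | some (_, none) => ℓ - 1

variable {ℓ} {p p' : Fin (r * (k - 1) + 1)} {q q' : Fin r}

theorem level_pathVertex (j : ℕ) : level ℓ (pathVertex ℓ p q j) = min j (ℓ - 1) := by
  cases j with
  | zero => rfl
  | succ j =>
    simp only [pathVertex]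
    split_ifs <;> simp only [level] <;> omega

theorem pathVertex_succ_of_lt {i : ℕ} (h : i < ℓ - 2) :
    pathVertex ℓ p q (i + 1) = some (p, some (q, ⟨i, h⟩)) :=
  dif_pos h

theorem pathVertex_succ_of_le {i : ℕ} (h : ℓ - 2 ≤ i) : pathVertex ℓ p q (i + 1) = some (p, none) :=
  dif_neg h.not_gt

theorem pathEdge_inj (hℓ : 3 ≤ ℓ) {t t' : ℕ} (ht : t ≤ ℓ - 2) (ht' : t' ≤ ℓ - 2)
    (h : pathEdge ℓ p q t = pathEdge ℓ p' q' t') : p = p' ∧ q = q' ∧ t = t' := by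
  have hlevel {j j'} (h : pathVertex ℓ p q j = pathVertex ℓ p' q' j') :
      min j (ℓ - 1) = min j' (ℓ - 1) := by
    simpa only [level_pathVertex] using congrArg (level ℓ) h
  obtain ⟨hlo, hhi⟩ : pathVertex ℓ p q t = pathVertex ℓ p' q' t' ∧
      pathVertex ℓ p q (t + 1) = pathVertex ℓ p' q' (t' + 1) := by
    rcases Sym2.eq_iff.1 h with h | ⟨h₁, h₂⟩
    · exact h
    · have := hlevel h₁; have := hlevel h₂; omega
  obtain rfl : t = t' := by have := hlevel hlo; omega
  -- the upper end of an edge is an inner vertex, except on the last edge, whose lower end is one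
  by_cases hlast : t < ℓ - 2
  · rw [pathVertex_succ_of_lt hlast, pathVertex_succ_of_lt hlast] at hhi
    simp_all
  · obtain ⟨i, rfl⟩ : ∃ i, t = i + 1 := ⟨t - 1, by omega⟩
    rw [pathVertex_succ_of_lt (by omega), pathVertex_succ_of_lt (by omega)] at hlo
    simp_all

theorem exists_pathVertex_of_cBase {x y : CV ℓ k r} (h : cBase ℓ k r false x y) :
    ∃ p q t, t ≤ ℓ - 2 ∧ pathVertex ℓ p q t = x ∧ pathVertex ℓ p q (t + 1) = y := by
  rcases x with _ | ⟨p, _ | ⟨q, i⟩⟩ <;> rcases y with _ | ⟨p', _ | ⟨q', j⟩⟩ <;>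
    simp only [cBase, Bool.false_eq_true] at h
  · refine ⟨p', q', 0, by omega, rfl, ?_⟩
    rw [pathVertex_succ_of_lt (by omega)]
    simp [Fin.ext_iff, h]
  · obtain ⟨rfl, hi⟩ := h
    exact ⟨p, q, i + 1, by omega, pathVertex_succ_of_lt i.2, pathVertex_succ_of_le (by omega)⟩
  · obtain ⟨rfl, rfl, hj⟩ := h
    refine ⟨p, q, i + 1, by omega, pathVertex_succ_of_lt i.2, ?_⟩
    rw [pathVertex_succ_of_lt (by omega)]
    simp [Fin.ext_iff, hj]

theorem exists_pathEdge_eq {e : Sym2 (CV ℓ k r)} (he : e ∈ (CGraph ℓ k r false).edgeSet) :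
    ∃ p q t, t ≤ ℓ - 2 ∧ pathEdge ℓ p q t = e := by
  induction e using Sym2.ind with
  | _ x y =>
    rcases he.2 with h | h
    · obtain ⟨p, q, t, ht, rfl, rfl⟩ := exists_pathVertex_of_cBase h
      exact ⟨p, q, t, ht, rfl⟩
    · obtain ⟨p, q, t, ht, rfl, rfl⟩ := exists_pathVertex_of_cBase h
      exact ⟨p, q, t, ht, Sym2.eq_swap⟩

theorem adj_pathVertex (hℓ : 3 ≤ ℓ) {t : ℕ} (ht : t ≤ ℓ - 2) :
    (CGraph ℓ k r false).Adj (pathVertex ℓ p q t) (pathVertex ℓ p q (t + 1)) := by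
  refine ⟨fun h => ?_, Or.inl ?_⟩
  · have := congrArg (level ℓ) h
    simp only [level_pathVertex] at this
    omega
  cases t with
  | zero => rw [pathVertex_succ_of_lt (by omega)]; rfl
  | succ i =>
    rw [pathVertex_succ_of_lt (by omega)]
    by_cases hi : i + 1 < ℓ - 2
    · rw [pathVertex_succ_of_lt hi]
      exact ⟨rfl, rfl, rfl⟩
    · rw [pathVertex_succ_of_le (by omega)]
      exact ⟨rfl, show i = ℓ - 3 by omega⟩

end Coordinates

open scoped Classical

section Counting

variable {ℓ k r : ℕ} (H : (CGraph ℓ k r false).Subgraph)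

noncomputable def pathEdges (p : Fin (r * (k - 1) + 1)) (q : Fin r) : Finset ℕ :=
  {t ∈ range (ℓ - 2 + 1) | pathEdge ℓ p q t ∈ H.edgeSet}

/-- Inner vertex `i + 1` of the path is recorded as `i`. -/
noncomputable def pathVerts (p : Fin (r * (k - 1) + 1)) (q : Fin r) : Finset ℕ :=
  {i ∈ range (ℓ - 2) | pathVertex ℓ p q (i + 1) ∈ H.verts}

noncomputable def ends : Finset (Fin (r * (k - 1) + 1)) :=
  {p | some (p, none) ∈ H.verts}

theorem ncard_edgeSet_eq_sum (hℓ : 3 ≤ ℓ) :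
    H.edgeSet.ncard = ∑ pq : Fin (r * (k - 1) + 1) × Fin r, #(pathEdges H pq.1 pq.2) := by
  let f : (Fin (r * (k - 1) + 1) × Fin r) × Fin (ℓ - 2 + 1) → Sym2 (CV ℓ k r) :=
    fun a => pathEdge ℓ a.1.1 a.1.2 a.2
  have hf : Function.Injective f := by
    rintro ⟨⟨p, q⟩, t⟩ ⟨⟨p', q'⟩, t'⟩ h
    obtain ⟨rfl, rfl, ht⟩ := pathEdge_inj hℓ (by omega) (by omega) h
    exact Prod.ext rfl (Fin.ext ht)
  have hrange : H.edgeSet ⊆ Set.range f := fun e he => by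
    obtain ⟨p, q, t, ht, rfl⟩ := exists_pathEdge_eq (H.edgeSet_subset he)
    exact ⟨((p, q), ⟨t, by omega⟩), rfl⟩
  rw [← Set.ncard_preimage_of_injective_subset_range hf hrange, Set.ncard_eq_sum_ite,
    Fintype.sum_prod_type]
  exact sum_congr rfl fun pq _ =>
    Fin.sum_univ_ite_eq_card_filter _ fun t => pathEdge ℓ pq.1 pq.2 t ∈ H.edgeSet

theorem ncard_verts_eq_sum :
    H.verts.ncard = (if none ∈ H.verts then 1 else 0) + #(ends H) +
      ∑ pq : Fin (r * (k - 1) + 1) × Fin r, #(pathVerts H pq.1 pq.2) := by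
  rw [Set.ncard_eq_sum_ite, Fintype.sum_option, Fintype.sum_prod_type, add_assoc]
  congr 1
  rw [ends, card_filter, Fintype.sum_prod_type, ← sum_add_distrib]
  refine sum_congr rfl fun p _ => ?_
  rw [Fintype.sum_option, Fintype.sum_prod_type]
  congr 1
  refine sum_congr rfl fun q _ => ?_
  rw [pathVerts, ← Fin.sum_univ_ite_eq_card_filter]
  exact sum_congr rfl fun i _ => by rw [pathVertex_succ_of_lt i.2]

end Counting

section PathBounds

variable {ℓ k r : ℕ} {H : (CGraph ℓ k r false).Subgraph} {p : Fin (r * (k - 1) + 1)} {q : Fin r}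
  {t : ℕ}

theorem pathEdges_subset : pathEdges H p q ⊆ range (ℓ - 2 + 1) :=
  filter_subset _ _

theorem pathVertex_mem_verts (ht : t ∈ pathEdges H p q) :
    pathVertex ℓ p q t ∈ H.verts ∧ pathVertex ℓ p q (t + 1) ∈ H.verts := by
  have he := (mem_filter.1 ht).2
  exact ⟨H.mem_verts_of_mem_edge he (Sym2.mem_mk_left _ _),
    H.mem_verts_of_mem_edge he (Sym2.mem_mk_right _ _)⟩

theorem sub_one_mem_pathVerts (ht : t ∈ pathEdges H p q) (h0 : 0 < t) :
    t - 1 ∈ pathVerts H p q := by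
  have := mem_range.1 (pathEdges_subset ht)
  obtain ⟨i, rfl⟩ : ∃ i, t = i + 1 := ⟨t - 1, by omega⟩
  exact mem_filter.2 ⟨mem_range.2 (by omega), (pathVertex_mem_verts ht).1⟩

theorem mem_pathVerts (ht : t ∈ pathEdges H p q) (hlt : t < ℓ - 2) : t ∈ pathVerts H p q :=
  mem_filter.2 ⟨mem_range.2 hlt, (pathVertex_mem_verts ht).2⟩

theorem center_mem_verts (h : 0 ∈ pathEdges H p q) : none ∈ H.verts :=
  (pathVertex_mem_verts h).1

theorem mem_ends (h : ℓ - 2 ∈ pathEdges H p q) : p ∈ ends H := by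
  have := (pathVertex_mem_verts h).2
  rw [pathVertex_succ_of_le le_rfl] at this
  exact mem_filter.2 ⟨mem_univ _, this⟩

theorem card_pathEdges_le (hnf : pathEdges H p q ≠ range (ℓ - 2 + 1)) :
    #(pathEdges H p q) ≤ #(pathVerts H p q) :=
  card_le_card_of_ne_range pathEdges_subset hnf (fun _ ht => sub_one_mem_pathVerts ht)
    (fun _ ht => mem_pathVerts ht)

theorem card_pathEdges_lt (hne : (pathEdges H p q).Nonempty)
    (hnf : pathEdges H p q ≠ range (ℓ - 2 + 1)) :
    #(pathEdges H p q) < #(pathVerts H p q) + (if none ∈ H.verts then 1 else 0) + #(ends H) := by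
  by_cases hc : none ∈ H.verts
  · have := card_pathEdges_le hnf
    simp only [hc, if_true]
    omega
  by_cases hb : p ∈ ends H
  · have := card_pathEdges_le hnf
    have := card_pos.2 ⟨p, hb⟩
    omega
  have := card_lt_card_of_ends_notMem pathEdges_subset hne (fun h => hc (center_mem_verts h))
    (fun h => hb (mem_ends h)) (fun _ ht => sub_one_mem_pathVerts ht) (fun _ ht => mem_pathVerts ht)
  omega

end PathBounds

section FullPaths

variable {ℓ k r : ℕ} (H : (CGraph ℓ k r false).Subgraph)

noncomputable def fullPaths : Finset (Fin (r * (k - 1) + 1) × Fin r) :=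
  {pq | pathEdges H pq.1 pq.2 = range (ℓ - 2 + 1)}

variable {H}

theorem center_mem_verts_of_mem_fullPaths {pq : Fin (r * (k - 1) + 1) × Fin r}
    (h : pq ∈ fullPaths H) : none ∈ H.verts :=
  center_mem_verts (q := pq.2) (by rw [(mem_filter.1 h).2]; simp)

theorem card_fullPaths_le : #(fullPaths H) ≤ #(ends H) * r := by
  calc #(fullPaths H) ≤ #(ends H ×ˢ (univ : Finset (Fin r))) := by
        refine card_le_card fun pq h => mem_product.2 ⟨mem_ends (q := pq.2) ?_, mem_univ _⟩
        rw [(mem_filter.1 h).2]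
        simp
    _ = #(ends H) * r := by rw [card_product, card_univ, Fintype.card_fin]

theorem mul_card_pathEdges_le (pq : Fin (r * (k - 1) + 1) × Fin r) :
    r * (ℓ - 2) * #(pathEdges H pq.1 pq.2) ≤
      (r * (ℓ - 2) + (r - 1)) * #(pathVerts H pq.1 pq.2) +
        if pq ∈ fullPaths H then ℓ - 2 else 0 := by
  split_ifs with hfull
  · have hE : pathEdges H pq.1 pq.2 = range (ℓ - 2 + 1) := (mem_filter.1 hfull).2
    have hV : ℓ - 2 ≤ #(pathVerts H pq.1 pq.2) := by
      refine (card_range _).symm.le.trans (card_le_card fun t ht => ?_)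
      have ht := mem_range.1 ht
      exact mem_pathVerts (by rw [hE]; exact mem_range.2 (by omega)) ht
    -- a full path has one edge more than inner vertices: `r(ℓ-2)(ℓ-1) = Y(ℓ-2) + (ℓ-2)`
    obtain ⟨s, rfl⟩ : ∃ s, r = s + 1 := ⟨r - 1, by have := pq.2.pos; omega⟩
    rw [hE, card_range, Nat.add_sub_cancel]
    nlinarith [Nat.mul_le_mul_left ((s + 1) * (ℓ - 2) + s) hV]
  · have := card_pathEdges_le fun h => hfull (mem_filter.2 ⟨mem_univ _, h⟩)
    rw [add_zero]
    exact Nat.mul_le_mul (Nat.le_add_right _ _) this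

theorem mul_sum_card_pathEdges_le :
    r * (ℓ - 2) * ∑ pq : Fin (r * (k - 1) + 1) × Fin r, #(pathEdges H pq.1 pq.2) ≤
      (r * (ℓ - 2) + (r - 1)) * ∑ pq : Fin (r * (k - 1) + 1) × Fin r, #(pathVerts H pq.1 pq.2) +
        (ℓ - 2) * #(fullPaths H) := by
  have hfull : (ℓ - 2) * #(fullPaths H) =
      ∑ pq : Fin (r * (k - 1) + 1) × Fin r, if pq ∈ fullPaths H then ℓ - 2 else 0 := by
    rw [sum_ite_mem, univ_inter, sum_const, smul_eq_mul, mul_comm]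
  rw [hfull, mul_sum, mul_sum, ← sum_add_distrib]
  exact sum_le_sum fun pq _ => mul_card_pathEdges_le pq

end FullPaths

section KeyInequality

variable {ℓ k r : ℕ}

theorem mul_ncard_edgeSet_le (hℓ : 3 ≤ ℓ) (H : (CGraph ℓ k r false).Subgraph)
    (hv : 3 ≤ H.verts.ncard) :
    r * (ℓ - 2) * H.edgeSet.ncard + 2 * (r * (ℓ - 2) + (r - 1)) ≤
      (r * (ℓ - 2) + (r - 1)) * H.verts.ncard + r * (ℓ - 2) := by
  rw [ncard_edgeSet_eq_sum H hℓ]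
  rw [ncard_verts_eq_sum H] at hv ⊢
  rcases (fullPaths H).eq_empty_or_nonempty with hF | ⟨pq, hpq⟩
  · have hnf (pq : Fin (r * (k - 1) + 1) × Fin r) :
        pathEdges H pq.1 pq.2 ≠ range (ℓ - 2 + 1) := fun h => by
      have hpq : pq ∈ fullPaths H := mem_filter.2 ⟨mem_univ pq, h⟩
      simp [hF] at hpq
    by_cases hE : ∃ pq : Fin (r * (k - 1) + 1) × Fin r, (pathEdges H pq.1 pq.2).Nonempty
    · obtain ⟨pq, hne⟩ := hE
      have hlt := card_pathEdges_lt hne (hnf pq)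
      have hrest : r * (ℓ - 2) * ∑ pq' ∈ univ.erase pq, #(pathEdges H pq'.1 pq'.2) ≤
          (r * (ℓ - 2) + (r - 1)) * ∑ pq' ∈ univ.erase pq, #(pathVerts H pq'.1 pq'.2) := by
        rw [mul_sum, mul_sum]
        exact sum_le_sum fun pq' _ =>
          Nat.mul_le_mul (Nat.le_add_right _ _) (card_pathEdges_le (hnf pq'))
      rw [← add_sum_erase univ (fun pq => #(pathEdges H pq.1 pq.2)) (mem_univ pq),
        ← add_sum_erase univ (fun pq => #(pathVerts H pq.1 pq.2)) (mem_univ pq)]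
      nlinarith [Nat.mul_le_mul_left (r * (ℓ - 2) + (r - 1)) hlt,
        Nat.mul_le_mul_left (r - 1) (card_pos.2 hne)]
    · simp only [not_exists, not_nonempty_iff_eq_empty] at hE
      simp only [hE, card_empty, sum_const_zero, mul_zero, zero_add] at hv ⊢
      nlinarith [Nat.mul_le_mul_left (r * (ℓ - 2) + (r - 1)) hv]
  · have hb := card_pos.2 ⟨pq.1, mem_ends (q := pq.2) (by rw [(mem_filter.1 hpq).2]; simp)⟩
    rw [if_pos (center_mem_verts_of_mem_fullPaths hpq)]
    have := mul_sum_card_pathEdges_le (H := H)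
    have := Nat.mul_le_mul_left (ℓ - 2) (card_fullPaths_le (H := H))
    nlinarith [Nat.mul_le_mul_left (r - 1) hb]

end KeyInequality

section Petal

variable {ℓ k r : ℕ}

def petal (ℓ k r : ℕ) : (CGraph ℓ k r false).Subgraph :=
  (⊤ : (CGraph ℓ k r false).Subgraph).induce (insert none (Set.range fun w => some (0, w)))

theorem ncard_verts_petal : (petal ℓ k r).verts.ncard = r * (ℓ - 2) + 2 := by
  rw [petal, SimpleGraph.Subgraph.induce_verts, Set.ncard_insert_of_notMem (by simp),
    Set.ncard_range_of_injective fun _ _ h => by simpa using h, Nat.card_eq_fintype_card,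
    Fintype.card_option, Fintype.card_prod, Fintype.card_fin, Fintype.card_fin]

theorem petal_adj {x y : CV ℓ k r} : (petal ℓ k r).Adj x y ↔
    x ∈ (petal ℓ k r).verts ∧ y ∈ (petal ℓ k r).verts ∧ (CGraph ℓ k r false).Adj x y :=
  Iff.rfl

theorem pathVertex_mem_petal_verts {p : Fin (r * (k - 1) + 1)} {q : Fin r} {j : ℕ} :
    pathVertex ℓ p q j ∈ (petal ℓ k r).verts ↔ j = 0 ∨ p = 0 := by
  cases j with
  | zero => simp [petal, pathVertex]
  | succ j =>
    simp only [petal, pathVertex, SimpleGraph.Subgraph.induce_verts]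
    split_ifs <;> simp [eq_comm]

theorem pathEdges_petal (hℓ : 3 ≤ ℓ) (p : Fin (r * (k - 1) + 1)) (q : Fin r) :
    pathEdges (petal ℓ k r) p q = if p = 0 then range (ℓ - 2 + 1) else ∅ := by
  ext t
  rw [pathEdges, mem_filter, pathEdge, SimpleGraph.Subgraph.mem_edgeSet, petal_adj,
    pathVertex_mem_petal_verts, pathVertex_mem_petal_verts]
  split_ifs with hp
  · simp only [hp, or_true, true_and, and_iff_left_iff_imp, mem_range]
    exact fun ht => adj_pathVertex hℓ (by omega)
  · simp [hp]

theorem ncard_edgeSet_petal (hℓ : 3 ≤ ℓ) : (petal ℓ k r).edgeSet.ncard = r * (ℓ - 1) := by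
  rw [ncard_edgeSet_eq_sum _ hℓ]
  simp only [pathEdges_petal hℓ, apply_ite card, card_range, card_empty]
  rw [Fintype.sum_prod_type' (fun p (_ : Fin r) => if p = 0 then ℓ - 2 + 1 else 0)]
  simp only [sum_const, card_univ, Fintype.card_fin, smul_eq_mul]
  rw [← mul_sum, sum_ite_eq' univ (0 : Fin _), if_pos (mem_univ _)]
  congr 1
  omega

end Petal

end CGraph

theorem CPlus_two_density_general (ℓ k r : ℕ) (hℓ : 3 ≤ ℓ) (hr : 2 ≤ r) :
    (∀ H : (CGraph ℓ k r false).Subgraph, 3 ≤ H.verts.ncard →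
      ((H.edgeSet.ncard : ℚ) - 1) / ((H.verts.ncard : ℚ) - 2) ≤
        (((r * (ℓ - 1) : ℕ) : ℚ) - 1) / ((r * (ℓ - 2) : ℕ) : ℚ)) ∧
    ∃ H : (CGraph ℓ k r false).Subgraph, 3 ≤ H.verts.ncard ∧
      ((H.edgeSet.ncard : ℚ) - 1) / ((H.verts.ncard : ℚ) - 2) =
        (((r * (ℓ - 1) : ℕ) : ℚ) - 1) / ((r * (ℓ - 2) : ℕ) : ℚ) := by
  have hpos : 0 < r * (ℓ - 2) := Nat.mul_pos (by omega) (by omega)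
  have hnum : ((r * (ℓ - 1) : ℕ) : ℚ) - 1 = ((r * (ℓ - 2) + (r - 1) : ℕ) : ℚ) := by
    have hsplit : r * (ℓ - 1) = r * (ℓ - 2) + (r - 1) + 1 := by
      rw [show ℓ - 1 = ℓ - 2 + 1 by omega, mul_add_one]
      omega
    rw [hsplit]
    push_cast
    ring
  refine ⟨fun H hv => ?_, CGraph.petal ℓ k r, by rw [CGraph.ncard_verts_petal]; omega, ?_⟩
  · have hv' : (3 : ℚ) ≤ H.verts.ncard := by exact_mod_cast hv
    have key : ((r * (ℓ - 2) * H.edgeSet.ncard + 2 * (r * (ℓ - 2) + (r - 1)) : ℕ) : ℚ) ≤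
        ((r * (ℓ - 2) + (r - 1)) * H.verts.ncard + r * (ℓ - 2) : ℕ) :=
      Nat.cast_le.2 (CGraph.mul_ncard_edgeSet_le hℓ H hv)
    rw [hnum, div_le_div_iff₀ (by linarith) (by exact_mod_cast hpos)]
    push_cast at key ⊢
    linarith
  · rw [CGraph.ncard_verts_petal, CGraph.ncard_edgeSet_petal hℓ]
    push_cast
    ring

/-- For `ℓ ≥ 3`, `k ≥ 3`, `r ≥ 2`, the 2-density of `C_{ℓ,k}^{r+}`
equals `(r(ℓ−1)−1)/(r(ℓ−2))`: every subgraph `H` with `v(H) ≥ 3` satisfies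
`(e(H)−1)/(v(H)−2) ≤ (r(ℓ−1)−1)/(r(ℓ−2))`, and the maximum is attained (by a single
petal, which has `r(ℓ−2)+2` vertices and `r(ℓ−1)` edges). -/
theorem CPlus_two_density (ℓ k r : ℕ) (hℓ : 3 ≤ ℓ) (hk : 3 ≤ k) (hr : 2 ≤ r) :
    (∀ H : (CGraph ℓ k r false).Subgraph, 3 ≤ H.verts.ncard →
      ((H.edgeSet.ncard : ℚ) - 1) / ((H.verts.ncard : ℚ) - 2) ≤
        (((r * (ℓ - 1) : ℕ) : ℚ) - 1) / ((r * (ℓ - 2) : ℕ) : ℚ)) ∧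
    ∃ H : (CGraph ℓ k r false).Subgraph, 3 ≤ H.verts.ncard ∧
      ((H.edgeSet.ncard : ℚ) - 1) / ((H.verts.ncard : ℚ) - 2) =
        (((r * (ℓ - 1) : ℕ) : ℚ) - 1) / ((r * (ℓ - 2) : ℕ) : ℚ) :=
  CPlus_two_density_general ℓ k r hℓ hr
end
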